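/- arXiv:2210.01649 — 6 statements merged into one kernel-verified Lean document; each statement's English description precedes it below -/
import Mathlib

section
/- Suppose 0 ≤ β_a < β_u < δ < β, all of α_i, α_a, ν_a, δ_a, δ_u, η are positive, m ≥ 1, and α_a/δ_a < (β−β_a)/(δ−β_a). Then the SAUIS system with ε = 0 has an endemic equilibrium in Ω; that is, there exist a > 0, u > 0, i > 0 with a + u + i < 1 at which all three right-hand sides of the system vanish. -/
/-!
Solving the first two equations for `s` and `u` expresses them through `a` and `i`. For each
`i ∈ (0, 1)` the mass balance `a + u + s + i = 1` is then strictly increasing in `a`, so it has a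
root `a(i)`, which depends continuously on `i`. The last equation asks for a zero of the growth
rate `β s + βa a + βu u - δ` along this curve. It is negative near `i = 1`, where `s + a + u` is
small. Near `i = 0` the balance keeps `a` away from `0`, so the first equation keeps
`s` above any `c < min (δa / αa) 1`. The ratio hypothesis says exactly that this minimum exceeds
`(δ - βa) / (β - βa)`, which makes the growth rate positive. The intermediate value theorem
finishes the proof.
-/

open Filter Topology Set

theorem continuousAt_root_of_strictMonoOn {X : Type*} [TopologicalSpace X] {F : X → ℝ → ℝ}
    {g : X → ℝ} {I : Set ℝ} {x₀ : X} (hI : IsOpen I)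
    (hF : ∀ y ∈ I, ContinuousAt (F · y) x₀)
    (hg : ∀ᶠ x in 𝓝 x₀, StrictMonoOn (F x) I ∧ g x ∈ I ∧ F x (g x) = 0) :
    ContinuousAt g x₀ := by
  obtain ⟨hmono₀, hgI, hroot₀⟩ := hg.self_of_nhds
  have hI₀ : ∀ᶠ y in 𝓝 (g x₀), y ∈ I := hI.mem_nhds hgI
  refine tendsto_order.2 ⟨fun y hy => ?_, fun y hy => ?_⟩
  · obtain ⟨z, ⟨hzI, hyz⟩, hzg⟩ := (((hI₀.and (eventually_gt_nhds hy)).filter_mono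
      nhdsWithin_le_nhds).and self_mem_nhdsWithin).exists (f := 𝓝[<] (g x₀))
    have hFz : F x₀ z < 0 := hroot₀ ▸ hmono₀ hzI hgI hzg
    filter_upwards [hg, (hF z hzI).eventually (eventually_lt_nhds hFz)]
      with x ⟨hmono, hgx, hroot⟩ hFxz
    by_contra! hle
    exact (hroot ▸ hmono.monotoneOn hgx hzI (hle.trans hyz.le)).not_gt hFxz
  · obtain ⟨z, ⟨hzI, hzy⟩, hgz⟩ := (((hI₀.and (eventually_lt_nhds hy)).filter_mono
      nhdsWithin_le_nhds).and self_mem_nhdsWithin).exists (f := 𝓝[>] (g x₀))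
    have hFz : 0 < F x₀ z := hroot₀ ▸ hmono₀ hgI hzI hgz
    filter_upwards [hg, (hF z hzI).eventually (eventually_gt_nhds hFz)]
      with x ⟨hmono, hgx, hroot⟩ hFxz
    by_contra! hle
    exact (hroot ▸ hmono.monotoneOn hzI hgx (hzy.le.trans hle)).not_gt hFxz

-- The paper's `σ_m`.
noncomputable def hill (η m i : ℝ) : ℝ := 1 / (1 + (i / η) ^ m)

section Hill

variable {η m i : ℝ}

lemma one_add_rpow_div_pos (hη : 0 ≤ η) (hi : 0 ≤ i) : 0 < 1 + (i / η) ^ m := by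
  have := Real.rpow_nonneg (div_nonneg hi hη) m
  linarith

lemma hill_pos (hη : 0 ≤ η) (hi : 0 ≤ i) : 0 < hill η m i :=
  one_div_pos.2 (one_add_rpow_div_pos hη hi)

lemma hill_le_one (hη : 0 ≤ η) (hi : 0 ≤ i) : hill η m i ≤ 1 := by
  have := Real.rpow_nonneg (div_nonneg hi hη) m
  exact div_le_one_of_le₀ (by linarith) (one_add_rpow_div_pos hη hi).le

lemma hill_zero (hm : m ≠ 0) : hill η m 0 = 1 := by
  simp [hill, Real.zero_rpow hm]

lemma continuousAt_hill (hη : 0 ≤ η) (hm : 0 ≤ m) (hi : 0 ≤ i) :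
    ContinuousAt (hill η m) i :=
  continuousAt_const.div (continuousAt_const.add
    ((continuousAt_id.div_const η).rpow_const (Or.inr hm))) (one_add_rpow_div_pos hη hi).ne'

end Hill

structure SAUISParams where
  β : ℝ
  βa : ℝ
  βu : ℝ
  αi : ℝ
  αa : ℝ
  νa : ℝ
  δ : ℝ
  δa : ℝ
  δu : ℝ
  η : ℝ
  m : ℝ

namespace SAUISParams

variable (p : SAUISParams)

structure Admissible : Prop where
  βa_nonneg : 0 ≤ p.βa
  βa_lt_βu : p.βa < p.βu
  βu_lt_δ : p.βu < p.δ
  δ_lt_β : p.δ < p.β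
  αi_pos : 0 < p.αi
  αa_pos : 0 < p.αa
  νa_pos : 0 < p.νa
  δa_pos : 0 < p.δa
  δu_pos : 0 < p.δu
  η_pos : 0 < p.η
  one_le_m : 1 ≤ p.m
  ratio_lt : p.αa / p.δa < (p.β - p.βa) / (p.δ - p.βa)

def IsEndemicEquilibrium (a u i : ℝ) : Prop :=
  0 < a ∧ 0 < u ∧ 0 < i ∧ a + u + i < 1 ∧
    p.αi * (1 - a - u - i) * i + p.αa * (1 - a - u - i) * a - p.βa * a * i
      - p.δa * hill p.η p.m i * a = 0 ∧
    p.δa * hill p.η p.m i * a + p.νa * hill p.η p.m i * (1 - a - u - i) * a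
      - p.βu * u * i - p.δu * u = 0 ∧
    (p.β * (1 - a - u - i) + p.βa * a + p.βu * u - p.δ) * i = 0

/- For fixed `a` and `i`, the first equation is linear in `s` and the second in `u`; these are
their solutions. -/
noncomputable def sOf (a i : ℝ) : ℝ :=
  a * (p.δa * hill p.η p.m i + p.βa * i) / (p.αi * i + p.αa * a)

noncomputable def uOf (a i : ℝ) : ℝ :=
  hill p.η p.m i * (p.δa + p.νa * p.sOf a i) * a / (p.βu * i + p.δu)

noncomputable def excess (a i : ℝ) : ℝ := a + p.uOf a i + p.sOf a i + i - 1

noncomputable def aOf (i : ℝ) : ℝ := Classical.epsilon fun a => 0 < a ∧ p.excess a i = 0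

noncomputable def growthRate (i : ℝ) : ℝ :=
  p.β * p.sOf (p.aOf i) i + p.βa * p.aOf i + p.βu * p.uOf (p.aOf i) i - p.δ

variable {p} {a i : ℝ}

lemma Admissible.βu_pos (hp : p.Admissible) : 0 < p.βu := hp.βa_nonneg.trans_lt hp.βa_lt_βu

lemma Admissible.hill_pos (hp : p.Admissible) (hi : 0 ≤ i) : 0 < hill p.η p.m i :=
  _root_.hill_pos hp.η_pos.le hi

lemma sOf_denom_pos (hp : p.Admissible) (ha : 0 ≤ a) (hi : 0 < i) :
    0 < p.αi * i + p.αa * a := by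
  nlinarith [mul_pos hp.αi_pos hi, mul_nonneg hp.αa_pos.le ha]

lemma uOf_denom_pos (hp : p.Admissible) (hi : 0 ≤ i) : 0 < p.βu * i + p.δu := by
  nlinarith [mul_nonneg hp.βu_pos.le hi, hp.δu_pos]

lemma sOf_mul_denom (hp : p.Admissible) (ha : 0 ≤ a) (hi : 0 < i) :
    p.sOf a i * (p.αi * i + p.αa * a) = a * (p.δa * hill p.η p.m i + p.βa * i) :=
  div_mul_cancel₀ _ (sOf_denom_pos hp ha hi).ne'

lemma uOf_mul_denom (hp : p.Admissible) (hi : 0 ≤ i) :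
    p.uOf a i * (p.βu * i + p.δu) = hill p.η p.m i * (p.δa + p.νa * p.sOf a i) * a :=
  div_mul_cancel₀ _ (uOf_denom_pos hp hi).ne'

lemma sOf_pos (hp : p.Admissible) (ha : 0 < a) (hi : 0 < i) : 0 < p.sOf a i := by
  have := hp.hill_pos hi.le
  exact div_pos (mul_pos ha (by nlinarith [hp.δa_pos, hp.βa_nonneg])) (sOf_denom_pos hp ha.le hi)

lemma sOf_monotoneOn (hp : p.Admissible) (hi : 0 < i) : MonotoneOn (p.sOf · i) (Ioi 0) := by
  intro a ha b hb hab
  have := hp.hill_pos hi.le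
  have hc : 0 ≤ p.δa * hill p.η p.m i + p.βa * i := by nlinarith [hp.δa_pos, hp.βa_nonneg]
  simp only [sOf]
  rw [div_le_div_iff₀ (sOf_denom_pos hp ha.le hi) (sOf_denom_pos hp hb.le hi)]
  nlinarith [mul_nonneg (mul_nonneg (sub_nonneg.2 hab) hc) (mul_pos hp.αi_pos hi).le]

lemma uOf_pos (hp : p.Admissible) (ha : 0 < a) (hi : 0 < i) : 0 < p.uOf a i := by
  have := mul_pos hp.νa_pos (sOf_pos hp ha hi)
  exact div_pos (mul_pos (mul_pos (hp.hill_pos hi.le) (by linarith [hp.δa_pos])) ha)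
    (uOf_denom_pos hp hi.le)

lemma uOf_monotoneOn (hp : p.Admissible) (hi : 0 < i) : MonotoneOn (p.uOf · i) (Ioi 0) := by
  intro a ha b hb hab
  have hσ := hp.hill_pos hi.le
  have hs := mul_le_mul_of_nonneg_left (sOf_monotoneOn hp hi ha hb hab) hp.νa_pos.le
  have hsb := mul_pos hp.νa_pos (sOf_pos hp hb hi)
  have hk : hill p.η p.m i * (p.δa + p.νa * p.sOf a i) ≤
      hill p.η p.m i * (p.δa + p.νa * p.sOf b i) :=
    mul_le_mul_of_nonneg_left (by simpa using hs) hσ.le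
  have hk0 : 0 ≤ hill p.η p.m i * (p.δa + p.νa * p.sOf b i) :=
    (mul_pos hσ (by linarith [hp.δa_pos])).le
  exact div_le_div_of_nonneg_right (mul_le_mul hk hab (le_of_lt ha) hk0)
    (uOf_denom_pos hp hi.le).le

lemma excess_strictMonoOn (hp : p.Admissible) (hi : 0 < i) :
    StrictMonoOn (p.excess · i) (Ioi 0) := by
  intro a ha b hb hab
  have := uOf_monotoneOn hp hi ha hb hab.le
  have := sOf_monotoneOn hp hi ha hb hab.le
  simp only [excess]
  linarith

lemma excess_zero : p.excess 0 i = i - 1 := by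
  simp [excess, uOf, sOf]

lemma excess_one_pos (hp : p.Admissible) (hi : 0 < i) : 0 < p.excess 1 i := by
  have := uOf_pos hp one_pos hi
  have := sOf_pos hp one_pos hi
  simp only [excess]
  linarith

section Continuity

variable {X : Type*} [TopologicalSpace X] {f g : X → ℝ} {x : X}

lemma Admissible.continuousAt_hill_comp (hp : p.Admissible) (hg : ContinuousAt g x)
    (hgx : 0 ≤ g x) : ContinuousAt (fun y => hill p.η p.m (g y)) x :=
  (continuousAt_hill hp.η_pos.le (zero_le_one.trans hp.one_le_m) hgx).comp hg

lemma continuousAt_sOf (hp : p.Admissible) (hf : ContinuousAt f x) (hg : ContinuousAt g x)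
    (hfx : 0 ≤ f x) (hgx : 0 < g x) : ContinuousAt (fun y => p.sOf (f y) (g y)) x := by
  have hσ := hp.continuousAt_hill_comp hg hgx.le
  simp only [sOf]
  fun_prop (disch := exact (sOf_denom_pos hp hfx hgx).ne')

lemma continuousAt_uOf (hp : p.Admissible) (hf : ContinuousAt f x) (hg : ContinuousAt g x)
    (hfx : 0 ≤ f x) (hgx : 0 < g x) : ContinuousAt (fun y => p.uOf (f y) (g y)) x := by
  have hσ := hp.continuousAt_hill_comp hg hgx.le
  have hs := continuousAt_sOf hp hf hg hfx hgx
  simp only [uOf]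
  fun_prop (disch := exact (uOf_denom_pos hp hgx.le).ne')

lemma continuousAt_excess (hp : p.Admissible) (hf : ContinuousAt f x) (hg : ContinuousAt g x)
    (hfx : 0 ≤ f x) (hgx : 0 < g x) : ContinuousAt (fun y => p.excess (f y) (g y)) x := by
  have hs := continuousAt_sOf hp hf hg hfx hgx
  have hu := continuousAt_uOf hp hf hg hfx hgx
  simp only [excess]
  fun_prop

end Continuity

lemma exists_excess_eq_zero (hp : p.Admissible) (hi : 0 < i) (hi1 : i < 1) :
    ∃ a, 0 < a ∧ p.excess a i = 0 := by
  have hcont : ContinuousOn (p.excess · i) (Icc 0 1) := fun a ha =>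
    (continuousAt_excess hp continuousAt_id continuousAt_const ha.1 hi).continuousWithinAt
  obtain ⟨a, ha, hroot⟩ := intermediate_value_Ioo zero_le_one hcont
    ⟨by rw [excess_zero]; linarith, excess_one_pos hp hi⟩
  exact ⟨a, ha.1, hroot⟩

lemma aOf_spec (hp : p.Admissible) (hi : 0 < i) (hi1 : i < 1) :
    0 < p.aOf i ∧ p.excess (p.aOf i) i = 0 :=
  Classical.epsilon_spec (exists_excess_eq_zero hp hi hi1)

lemma continuousAt_aOf (hp : p.Admissible) (hi : 0 < i) (hi1 : i < 1) :
    ContinuousAt p.aOf i :=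
  continuousAt_root_of_strictMonoOn isOpen_Ioi
    (fun _ ha => continuousAt_excess hp continuousAt_const continuousAt_id (le_of_lt ha) hi)
    (eventually_of_mem (Ioo_mem_nhds hi hi1) fun _ hj =>
      ⟨excess_strictMonoOn hp hj.1, aOf_spec hp hj.1 hj.2⟩)

lemma continuousOn_growthRate (hp : p.Admissible) : ContinuousOn p.growthRate (Ioo 0 1) := by
  intro i hi
  have ha := continuousAt_aOf hp hi.1 hi.2
  have ha0 := (aOf_spec hp hi.1 hi.2).1.le
  have hs := continuousAt_sOf hp ha continuousAt_id ha0 hi.1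
  have hu := continuousAt_uOf hp ha continuousAt_id ha0 hi.1
  unfold growthRate
  exact ContinuousAt.continuousWithinAt (by fun_prop)

lemma isEndemicEquilibrium_of_growthRate_eq_zero (hp : p.Admissible) (hi : 0 < i) (hi1 : i < 1)
    (h : p.growthRate i = 0) : p.IsEndemicEquilibrium (p.aOf i) (p.uOf (p.aOf i) i) i := by
  obtain ⟨ha, hroot⟩ := aOf_spec hp hi hi1
  have hs : 1 - p.aOf i - p.uOf (p.aOf i) i - i = p.sOf (p.aOf i) i := by
    simp only [excess] at hroot
    linarith
  have hsa := sOf_mul_denom hp ha.le hi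
  have hua := uOf_mul_denom (a := p.aOf i) hp hi.le
  refine ⟨ha, uOf_pos hp ha hi, hi, by linarith [sOf_pos hp ha hi], ?_, ?_, ?_⟩ <;> rw [hs]
  · linear_combination hsa
  · linear_combination -hua
  · unfold growthRate at h
    linear_combination i * h

lemma eventually_growthRate_neg (hp : p.Admissible) :
    ∀ᶠ i in 𝓝[<] 1, p.growthRate i < 0 := by
  have hδ0 : 0 < p.δ := hp.βa_nonneg.trans_lt (hp.βa_lt_βu.trans hp.βu_lt_δ)
  have hδ : ∀ᶠ i in 𝓝 (1 : ℝ), p.β * (1 - i) < p.δ :=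
    (by fun_prop : Continuous fun i : ℝ => p.β * (1 - i)).continuousAt.eventually
      (eventually_lt_nhds (by simpa using hδ0))
  filter_upwards [nhdsWithin_le_nhds hδ, Ioo_mem_nhdsLT zero_lt_one] with i hβi hi
  obtain ⟨ha, hroot⟩ := aOf_spec hp hi.1 hi.2
  have hu := uOf_pos hp ha hi.1
  have hβa : p.βa < p.β := hp.βa_lt_βu.trans (hp.βu_lt_δ.trans hp.δ_lt_β)
  have hβu : p.βu < p.β := hp.βu_lt_δ.trans hp.δ_lt_β
  have hsum : p.β * (p.aOf i + p.uOf (p.aOf i) i + p.sOf (p.aOf i) i) = p.β * (1 - i) := by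
    simp only [excess] at hroot
    rw [show p.aOf i + p.uOf (p.aOf i) i + p.sOf (p.aOf i) i = 1 - i by linarith]
  simp only [growthRate]
  linarith [mul_lt_mul_of_pos_right hβa ha, mul_lt_mul_of_pos_right hβu hu]

lemma le_growthRate (hp : p.Admissible) (hi : 0 < i) (hi1 : i < 1) :
    (p.β - p.βa) * p.sOf (p.aOf i) i + p.βa * (1 - i) - p.δ ≤ p.growthRate i := by
  obtain ⟨ha, hroot⟩ := aOf_spec hp hi hi1
  have hu := uOf_pos hp ha hi
  have hsum : p.βa * (p.aOf i + p.uOf (p.aOf i) i) = p.βa * (1 - i - p.sOf (p.aOf i) i) := by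
    simp only [excess] at hroot
    rw [show p.aOf i + p.uOf (p.aOf i) i = 1 - i - p.sOf (p.aOf i) i by linarith]
  simp only [growthRate]
  linarith [mul_le_mul_of_nonneg_right hp.βa_lt_βu.le hu.le]

lemma le_sOf_aOf (hp : p.Admissible) {c ε : ℝ} (hi : 0 < i) (hi1 : i < 1) (hci : c + 2 * i ≤ 1)
    (hσ : p.αa * c + ε ≤ p.δa * hill p.η p.m i)
    (hαi : 2 * (1 + (p.δa + p.νa) / p.δu) * p.αi * i ≤ (1 - c) * ε) :
    c ≤ p.sOf (p.aOf i) i := by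
  obtain ⟨ha, hroot⟩ := aOf_spec hp hi hi1
  set a := p.aOf i
  set s := p.sOf a i
  set u := p.uOf a i
  have hs := sOf_pos hp ha hi
  have hu := uOf_pos hp ha hi
  have hbal : a + u + s + i = 1 := by simp only [excess] at hroot; linarith
  -- If `s < c`, the balance bounds `a` below, and then the first equation forces `a ε ≤ αi i`.
  by_contra! hsc
  have hu_le : u ≤ (p.δa + p.νa) / p.δu * a := by
    have hσ1 := hill_le_one (m := p.m) hp.η_pos.le hi.le
    have hk : hill p.η p.m i * (p.δa + p.νa * s) ≤ p.δa + p.νa := by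
      have : p.νa * s ≤ p.νa := mul_le_of_le_one_right hp.νa_pos.le (by linarith)
      have : 0 ≤ p.δa + p.νa * s := by linarith [hp.δa_pos, mul_pos hp.νa_pos hs]
      nlinarith [mul_le_of_le_one_left this hσ1]
    rw [div_mul_eq_mul_div, le_div_iff₀ hp.δu_pos]
    nlinarith [uOf_mul_denom (a := a) hp hi.le, mul_nonneg hu.le (mul_nonneg hp.βu_pos.le hi.le)]
  have ha_lower : 1 - c < 2 * (1 + (p.δa + p.νa) / p.δu) * a := by nlinarith
  have hε : a * ε ≤ p.αi * i := by
    have hsa := sOf_mul_denom hp ha.le hi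
    nlinarith [mul_le_mul_of_nonneg_right hsc.le (sOf_denom_pos hp ha.le hi).le,
      mul_nonneg hp.βa_nonneg hi.le, mul_pos hp.αi_pos hi]
  have hε0 : 0 < ε := by
    nlinarith [mul_pos hp.αi_pos hi, div_nonneg (add_pos hp.δa_pos hp.νa_pos).le hp.δu_pos.le]
  nlinarith [mul_lt_mul_of_pos_right ha_lower hε0]

lemma eventually_le_sOf_aOf (hp : p.Admissible) {c : ℝ} (hc : p.αa * c < p.δa) (hc1 : c < 1) :
    ∀ᶠ i in 𝓝[>] 0, c ≤ p.sOf (p.aOf i) i := by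
  set ε := (p.δa - p.αa * c) / 2 with hε
  have hσ : ∀ᶠ i in 𝓝 0, p.αa * c + ε < p.δa * hill p.η p.m i :=
    ((continuousAt_hill (m := p.m) hp.η_pos.le (zero_le_one.trans hp.one_le_m)
      le_rfl).const_mul p.δa).eventually (eventually_gt_nhds (by
        simp only [hill_zero (by linarith [hp.one_le_m] : p.m ≠ 0), hε]
        linarith))
  have hci : ∀ᶠ i in 𝓝 (0 : ℝ), c + 2 * i < 1 :=
    (by fun_prop : Continuous fun i : ℝ => c + 2 * i).continuousAt.eventually
      (eventually_lt_nhds (by simpa using hc1))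
  have hαi :
      ∀ᶠ i in 𝓝 (0 : ℝ), 2 * (1 + (p.δa + p.νa) / p.δu) * p.αi * i < (1 - c) * ε :=
    (continuous_const_mul _).continuousAt.eventually
      (eventually_lt_nhds (by simpa using mul_pos (sub_pos.2 hc1) (half_pos (sub_pos.2 hc))))
  filter_upwards [nhdsWithin_le_nhds hσ, nhdsWithin_le_nhds hci, nhdsWithin_le_nhds hαi,
    Ioo_mem_nhdsGT zero_lt_one] with i hσi hcii hαii hi
  exact le_sOf_aOf hp hi.1 hi.2 hcii.le hσi.le hαii.le

lemma eventually_growthRate_pos (hp : p.Admissible) :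
    ∀ᶠ i in 𝓝[>] 0, 0 < p.growthRate i := by
  have hδ : 0 < p.δ - p.βa := by linarith [hp.βa_lt_βu, hp.βu_lt_δ]
  have hβ : 0 < p.β - p.βa := by linarith [hp.βa_lt_βu, hp.βu_lt_δ, hp.δ_lt_β]
  have hsc : (p.δ - p.βa) / (p.β - p.βa) < min (p.δa / p.αa) 1 := by
    refine lt_min ?_ ((div_lt_one hβ).2 (by linarith [hp.δ_lt_β]))
    have := hp.ratio_lt
    rw [div_lt_div_iff₀ hp.δa_pos hδ] at this
    rw [div_lt_div_iff₀ hβ hp.αa_pos]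
    linarith
  obtain ⟨c, hsc, hcm⟩ := exists_between hsc
  have hc : p.αa * c < p.δa := by
    have := (lt_min_iff.1 hcm).1
    rwa [lt_div_iff₀ hp.αa_pos, mul_comm] at this
  have hgap : p.δ - p.βa < (p.β - p.βa) * c := by rwa [div_lt_iff₀' hβ] at hsc
  have hβa : ∀ᶠ i in 𝓝 (0 : ℝ), p.βa * i < (p.β - p.βa) * c - (p.δ - p.βa) :=
    (continuous_const_mul _).continuousAt.eventually
      (eventually_lt_nhds (by simpa using hgap))
  filter_upwards [eventually_le_sOf_aOf hp hc (lt_min_iff.1 hcm).2, nhdsWithin_le_nhds hβa,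
    Ioo_mem_nhdsGT zero_lt_one] with i hs hβai hi
  have := le_growthRate hp hi.1 hi.2
  nlinarith [mul_le_mul_of_nonneg_left hs hβ.le]

lemma exists_growthRate_eq_zero (hp : p.Admissible) : ∃ i ∈ Ioo 0 1, p.growthRate i = 0 := by
  obtain ⟨i₁, hneg, hi₁⟩ := ((eventually_growthRate_neg hp).and
    (Ioo_mem_nhdsLT zero_lt_one)).exists
  obtain ⟨i₀, hpos, hi₀⟩ := ((eventually_growthRate_pos hp).and
    (Ioo_mem_nhdsGT hi₁.1)).exists
  obtain ⟨i, hi, hroot⟩ := intermediate_value_Icc' hi₀.2.le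
    ((continuousOn_growthRate hp).mono (Icc_subset_Ioo hi₀.1 hi₁.2)) ⟨hneg.le, hpos.le⟩
  exact ⟨i, ⟨hi₀.1.trans_le hi.1, hi.2.trans_lt hi₁.2⟩, hroot⟩

theorem exists_isEndemicEquilibrium (hp : p.Admissible) :
    ∃ a u i, p.IsEndemicEquilibrium a u i := by
  obtain ⟨i, hi, h⟩ := exists_growthRate_eq_zero hp
  exact ⟨_, _, i, isEndemicEquilibrium_of_growthRate_eq_zero hp hi.1 hi.2 h⟩

end SAUISParams

/-- Existence of an endemic equilibrium of the SAUIS system with ε = 0,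
under 0 ≤ β_a < β_u < δ < β, positivity of the other parameters, m ≥ 1, η > 0,
and α_a/δ_a < (β−β_a)/(δ−β_a). -/
theorem sauis_endemic_equilibrium_exists
    (β βa βu αi αa νa δ δa δu η m : ℝ)
    (hβa0 : 0 ≤ βa) (hβaβu : βa < βu) (hβuδ : βu < δ) (hδβ : δ < β)
    (hαi : 0 < αi) (hαa : 0 < αa) (hνa : 0 < νa) (hδa : 0 < δa)
    (hδu : 0 < δu) (hη : 0 < η) (hm : 1 ≤ m)
    (hratio : αa / δa < (β - βa) / (δ - βa)) :
    ∃ a u i : ℝ, 0 < a ∧ 0 < u ∧ 0 < i ∧ a + u + i < 1 ∧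
      (αi * (1 - a - u - i) * i + αa * (1 - a - u - i) * a - βa * a * i
        - δa * (1 / (1 + (i / η) ^ m)) * a = 0) ∧
      (δa * (1 / (1 + (i / η) ^ m)) * a + νa * (1 / (1 + (i / η) ^ m)) * (1 - a - u - i) * a
        - βu * u * i - δu * u = 0) ∧
      ((β * (1 - a - u - i) + βa * a + βu * u - δ) * i = 0) :=
  SAUISParams.exists_isEndemicEquilibrium
    (p := ⟨β, βa, βu, αi, αa, νa, δ, δa, δu, η, m⟩)
    ⟨hβa0, hβaβu, hβuδ, hδβ, hαi, hαa, hνa, hδa, hδu, hη, hm, hratio⟩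
end

section
/- Suppose all the parameters α_a, ν_a, δ_a, δ_u are positive and α_a > δ_a. Define a*₀ = δ_u·(1 − δ_a/α_a) / (δ_a·(1 + ν_a/α_a) + δ_u) and u*₀ = (δ_a/δ_u)·(1 + ν_a/α_a)·a*₀. Then (a*₀, u*₀, 0) is an equilibrium of the SAUIS system with ε = 0, and it lies in the interior of the disease-free face of Ω: a*₀ > 0, u*₀ > 0, and a*₀ + u*₀ < 1. -/
/-- if α_a, ν_a, δ_a, δ_u > 0 and α_a > δ_a, then the point
(a*₀, u*₀, 0) with a*₀ = δ_u(1 − δ_a/α_a)/(δ_a(1 + ν_a/α_a) + δ_u) and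
u*₀ = (δ_a/δ_u)(1 + ν_a/α_a)a*₀ is an equilibrium of the SAUIS system with ε = 0
lying in the interior of the disease-free face of Ω. -/
theorem sauis_disease_free_equilibrium_e2
    (β βa βu αi αa νa δ δa δu η m : ℝ)
    (hαa : 0 < αa) (hνa : 0 < νa) (hδa : 0 < δa) (hδu : 0 < δu)
    (hη : 0 < η) (hm : 1 ≤ m) (hαaδa : δa < αa) :
    let a0 : ℝ := δu * (1 - δa / αa) / (δa * (1 + νa / αa) + δu)
    let u0 : ℝ := (δa / δu) * (1 + νa / αa) * a0
    (αi * (1 - a0 - u0 - 0) * 0 + αa * (1 - a0 - u0 - 0) * a0 - βa * a0 * 0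
      - δa * (1 / (1 + ((0 : ℝ) / η) ^ m)) * a0 = 0) ∧
    (δa * (1 / (1 + ((0 : ℝ) / η) ^ m)) * a0
      + νa * (1 / (1 + ((0 : ℝ) / η) ^ m)) * (1 - a0 - u0 - 0) * a0
      - βu * u0 * 0 - δu * u0 = 0) ∧
    ((β * (1 - a0 - u0 - 0) + βa * a0 + βu * u0 - δ) * 0 = 0) ∧
    0 < a0 ∧ 0 < u0 ∧ a0 + u0 < 1 := by
  intro a0 u0
  have ha0 : a0 = δu * (1 - δa / αa) / (δa * (1 + νa / αa) + δu) := rfl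
  have hu0 : u0 = (δa / δu) * (1 + νa / αa) * a0 := rfl
  have hαa' : αa ≠ 0 := ne_of_gt hαa
  have hδu' : δu ≠ 0 := ne_of_gt hδu
  have hD : 0 < δa * (1 + νa / αa) + δu := by positivity
  have hD' : δa * (1 + νa / αa) + δu ≠ 0 := ne_of_gt hD
  have hz : ((0:ℝ)/η) ^ m = 0 := by
    rw [zero_div]; exact Real.zero_rpow (by linarith)
  have hfrac : δa / αa < 1 := (div_lt_one hαa).mpr hαaδa
  have ha0pos : 0 < a0 := by
    rw [ha0]
    apply div_pos _ hD
    have h1 : 0 < 1 - δa / αa := by linarith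
    positivity
  have hu0pos : 0 < u0 := by
    rw [hu0]
    have h2 : 0 < 1 + νa / αa := by positivity
    positivity
  have hsum : a0 + u0 = 1 - δa / αa := by
    rw [hu0, ha0]; field_simp; ring
  refine ⟨?_, ?_, by ring, ha0pos, hu0pos, ?_⟩
  · rw [hz, hu0, ha0]; field_simp; ring
  · rw [hz, hu0, ha0]; field_simp; ring
  · rw [hsum]; linarith [div_pos hδa hαa]
end

section
/- Suppose 0 ≤ β_a < β_u < δ < β and α_i > 0. Then f₁(0,u) = (α_i·β_u·(β−β_u)/β²)·u² − (α_i·(β·β_u + β·δ − 2·β_u·δ)/β²)·u + α_i·δ·(β−δ)/β² for all u, and f₁(0,u) > 0 for every u ∈ [0, (β−δ)/(β−β_u)) while f₁(0, (β−δ)/(β−β_u)) = 0. -/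
/-! On the axis `a = 0` every term of `f₁` but `α_i s i` vanishes, and on the equilibrium plane
`s = 1 - u - i = (δ - β_u u)/β`. Hence `f₁(0,u) = α_i s i` is a product of two affine factors in `u`.
The factor `i` is positive before `u* = (β - δ)/(β - β_u)` and vanishes there; the factor `s` is
decreasing and still positive at `u*`, because `δ(β - β_u) - β_u(β - δ) = β(δ - β_u) > 0`. -/

namespace SAUIS

variable {β βu δ u : ℝ}

lemma one_sub_sub_plane (hβ : β ≠ 0) :
    1 - u - (β - δ - (β - βu) * u) / β = (δ - βu * u) / β := by
  field_simp
  ring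

lemma plane_numerator_pos (hβu : βu < β) (hu : u < (β - δ) / (β - βu)) :
    0 < β - δ - (β - βu) * u := by
  rw [lt_div_iff₀ (sub_pos.mpr hβu)] at hu
  linarith

lemma plane_numerator_eq_zero (hβu : βu ≠ β) :
    β - δ - (β - βu) * ((β - δ) / (β - βu)) = 0 := by
  rw [mul_div_cancel₀ _ (sub_ne_zero.mpr hβu.symm), sub_self]

lemma susceptible_numerator_pos (hβu : 0 ≤ βu) (hβuδ : βu < δ) (hδβ : δ < β)
    (hu : u < (β - δ) / (β - βu)) : 0 < δ - βu * u := by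
  have hβu_lt : 0 < β - βu := by linarith
  rw [lt_div_iff₀ hβu_lt] at hu
  nlinarith [mul_le_mul_of_nonneg_left hu.le hβu]

end SAUIS

theorem sauis_f1_on_axis_general
    (β βa βu αi αa δ δa η m : ℝ)
    (hβa0 : 0 ≤ βa) (hβaβu : βa < βu) (hβuδ : βu < δ) (hδβ : δ < β)
    (hαi : 0 < αi) :
    let iplane : ℝ → ℝ → ℝ := fun a u => (β - δ - (β - βa) * a - (β - βu) * u) / β
    let f1 : ℝ → ℝ → ℝ := fun a u =>
      αi * (1 - a - u - iplane a u) * iplane a u + αa * (1 - a - u - iplane a u) * a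
        - βa * a * iplane a u - δa * (1 / (1 + (iplane a u / η) ^ m)) * a
    (∀ u : ℝ, f1 0 u =
        (αi * βu * (β - βu) / β ^ 2) * u ^ 2
          - (αi * (β * βu + β * δ - 2 * βu * δ) / β ^ 2) * u
          + αi * δ * (β - δ) / β ^ 2) ∧
    (∀ u : ℝ, 0 ≤ u → u < (β - δ) / (β - βu) → 0 < f1 0 u) ∧
    f1 0 ((β - δ) / (β - βu)) = 0 := by
  intro iplane f1
  have hβu : 0 ≤ βu := hβa0.trans hβaβu.le
  have hβ : 0 < β := by linarith
  have hfactor : ∀ u, f1 0 u = αi * ((δ - βu * u) / β) * ((β - δ - (β - βu) * u) / β) := by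
    intro u
    simp only [f1, iplane, mul_zero, zero_mul, sub_zero, add_zero]
    rw [SAUIS.one_sub_sub_plane hβ.ne']
  refine ⟨fun u => ?_, fun u _ hu => ?_, ?_⟩
  · rw [hfactor]
    field_simp
    ring
  · rw [hfactor]
    have hs := SAUIS.susceptible_numerator_pos hβu hβuδ hδβ hu
    have hi := SAUIS.plane_numerator_pos (hβuδ.trans hδβ) hu
    positivity
  · rw [hfactor, SAUIS.plane_numerator_eq_zero (hβuδ.trans hδβ).ne, zero_div, mul_zero]

/-- with f₁(a,u) the a-equation right-hand side (ε = 0) evaluated on the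
endemic-equilibrium plane i = i(a,u) := (β − δ − (β−β_a)a − (β−β_u)u)/β, one has
f₁(0,u) = (α_i β_u (β−β_u)/β²)u² − (α_i(ββ_u + βδ − 2β_u δ)/β²)u + α_i δ(β−δ)/β²,
with f₁(0,u) > 0 on [0, (β−δ)/(β−β_u)) and f₁(0,(β−δ)/(β−β_u)) = 0. -/
theorem sauis_f1_on_axis
    (β βa βu αi αa δ δa η m : ℝ)
    (hβa0 : 0 ≤ βa) (hβaβu : βa < βu) (hβuδ : βu < δ) (hδβ : δ < β)
    (hαi : 0 < αi) (hη : 0 < η) (hm : 1 ≤ m) :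
    let iplane : ℝ → ℝ → ℝ := fun a u => (β - δ - (β - βa) * a - (β - βu) * u) / β
    let f1 : ℝ → ℝ → ℝ := fun a u =>
      αi * (1 - a - u - iplane a u) * iplane a u + αa * (1 - a - u - iplane a u) * a
        - βa * a * iplane a u - δa * (1 / (1 + (iplane a u / η) ^ m)) * a
    (∀ u : ℝ, f1 0 u =
        (αi * βu * (β - βu) / β ^ 2) * u ^ 2
          - (αi * (β * βu + β * δ - 2 * βu * δ) / β ^ 2) * u
          + αi * δ * (β - δ) / β ^ 2) ∧
    (∀ u : ℝ, 0 ≤ u → u < (β - δ) / (β - βu) → 0 < f1 0 u) ∧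
    f1 0 ((β - δ) / (β - βu)) = 0 :=
  sauis_f1_on_axis_general β βa βu αi αa δ δa η m hβa0 hβaβu hβuδ hδβ hαi
end

section
/- Suppose 0 ≤ β_a < β_u < δ < β. For each a, set u(a) = (β − δ − (β−β_a)·a)/(β−β_u), which corresponds to i(a, u(a)) = 0. Then f₁(a, u(a)) = (a/(β−β_u))·(α_a·(β_u−β_a)·a + α_a·(δ−β_u) − δ_a·(β−β_u)) for all a. Moreover, if in addition α_a > 0, δ_a > 0 and α_a/δ_a < (β−β_a)/(δ−β_a), then f₁(a, u(a)) < 0 for every a ∈ (0, (β−δ)/(β−β_a)] and f₁(0, u(0)) = 0. -/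
/-
On the line i = 0 the saturation factor is σ_m(0) = 1 and s = 1 - a - u, so f₁ collapses to
a·(α_a(1 - a - u(a)) - δ_a). Substituting u(a), the second factor is affine in a with positive
slope α_a(β_u - β_a)/(β - β_u); at the right endpoint a = (β - δ)/(β - β_a) it equals
(α_a(δ - β_a) - δ_a(β - β_a))/(β - β_a), which is negative exactly by the ratio hypothesis.
-/

lemma one_div_one_add_zero_div_rpow {η m : ℝ} (hm : m ≠ 0) : 1 / (1 + (0 / η) ^ m) = 1 := by
  rw [zero_div, Real.zero_rpow hm]
  norm_num

lemma hypotenuse_factor_neg {β βa βu δ αa δa a : ℝ} (hβaβu : βa < βu) (hβuδ : βu < δ)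
    (hδβ : δ < β) (hαa : 0 < αa) (hkey : αa * (δ - βa) < (β - βa) * δa)
    (ha : a ≤ (β - δ) / (β - βa)) :
    αa * (βu - βa) * a + αa * (δ - βu) - δa * (β - βu) < 0 := by
  have hββa : 0 < β - βa := by linarith
  calc αa * (βu - βa) * a + αa * (δ - βu) - δa * (β - βu)
      ≤ αa * (βu - βa) * ((β - δ) / (β - βa)) + αa * (δ - βu) - δa * (β - βu) := by
        gcongr
    _ = (β - βu) * (αa * (δ - βa) - δa * (β - βa)) / (β - βa) := by
        field_simp
        ring
    _ < 0 := div_neg_of_neg_of_pos (mul_neg_of_pos_of_neg (by linarith) (by linarith)) hββa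

theorem sauis_f1_on_hypotenuse_general
    (β βa βu αi αa δ δa η m : ℝ)
    (hβaβu : βa < βu) (hβuδ : βu < δ) (hδβ : δ < β)
    (hm : 1 ≤ m) :
    let iplane : ℝ → ℝ → ℝ := fun a u => (β - δ - (β - βa) * a - (β - βu) * u) / β
    let f1 : ℝ → ℝ → ℝ := fun a u =>
      αi * (1 - a - u - iplane a u) * iplane a u + αa * (1 - a - u - iplane a u) * a
        - βa * a * iplane a u - δa * (1 / (1 + (iplane a u / η) ^ m)) * a
    let uline : ℝ → ℝ := fun a => (β - δ - (β - βa) * a) / (β - βu)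
    (∀ a : ℝ, f1 a (uline a) =
        (a / (β - βu)) * (αa * (βu - βa) * a + αa * (δ - βu) - δa * (β - βu))) ∧
    (0 < αa → 0 < δa → αa / δa < (β - βa) / (δ - βa) →
      (∀ a : ℝ, 0 < a → a ≤ (β - δ) / (β - βa) → f1 a (uline a) < 0) ∧
      f1 0 (uline 0) = 0) := by
  intro iplane f1 uline
  have hββu : 0 < β - βu := by linarith
  have hi : ∀ a, iplane a (uline a) = 0 := fun a => by
    simp [iplane, uline, mul_div_cancel₀ _ hββu.ne']
  have hf1 : ∀ a, f1 a (uline a) =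
      (a / (β - βu)) * (αa * (βu - βa) * a + αa * (δ - βu) - δa * (β - βu)) := by
    intro a
    simp only [f1, hi, one_div_one_add_zero_div_rpow (by linarith : m ≠ 0)]
    simp only [uline]
    field_simp
    ring
  refine ⟨hf1, fun hαa hδa hratio => ⟨fun a ha hamax => ?_, by simp [hf1]⟩⟩
  have hkey : αa * (δ - βa) < (β - βa) * δa := (div_lt_div_iff₀ hδa (by linarith)).1 hratio
  rw [hf1]
  exact mul_neg_of_pos_of_neg (div_pos ha hββu)
    (hypotenuse_factor_neg hβaβu hβuδ hδβ hαa hkey hamax)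

/-- with f₁ the a-equation right-hand side (ε = 0) evaluated on the
endemic-equilibrium plane, and u(a) = (β − δ − (β−β_a)a)/(β−β_u) (the line i = 0),
f₁(a, u(a)) = (a/(β−β_u))·(α_a(β_u−β_a)a + α_a(δ−β_u) − δ_a(β−β_u)) for all a;
and if moreover α_a > 0, δ_a > 0 and α_a/δ_a < (β−β_a)/(δ−β_a), then
f₁(a, u(a)) < 0 on (0, (β−δ)/(β−β_a)] and f₁(0, u(0)) = 0. -/
theorem sauis_f1_on_hypotenuse
    (β βa βu αi αa δ δa η m : ℝ)
    (hβa0 : 0 ≤ βa) (hβaβu : βa < βu) (hβuδ : βu < δ) (hδβ : δ < β)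
    (hη : 0 < η) (hm : 1 ≤ m) :
    let iplane : ℝ → ℝ → ℝ := fun a u => (β - δ - (β - βa) * a - (β - βu) * u) / β
    let f1 : ℝ → ℝ → ℝ := fun a u =>
      αi * (1 - a - u - iplane a u) * iplane a u + αa * (1 - a - u - iplane a u) * a
        - βa * a * iplane a u - δa * (1 / (1 + (iplane a u / η) ^ m)) * a
    let uline : ℝ → ℝ := fun a => (β - δ - (β - βa) * a) / (β - βu)
    (∀ a : ℝ, f1 a (uline a) =
        (a / (β - βu)) * (αa * (βu - βa) * a + αa * (δ - βu) - δa * (β - βu))) ∧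
    (0 < αa → 0 < δa → αa / δa < (β - βa) / (δ - βa) →
      (∀ a : ℝ, 0 < a → a ≤ (β - δ) / (β - βa) → f1 a (uline a) < 0) ∧
      f1 0 (uline 0) = 0) :=
  sauis_f1_on_hypotenuse_general β βa βu αi αa δ δa η m hβaβu hβuδ hδβ hm
end

section
/- Suppose 0 ≤ β_a < β_u < δ < β, α_a > 0 and δ_a > 0. Then (δ_a·(β−β_u) − α_a·(δ−β_u)) / (α_a·(β_u−β_a)) > (β−δ)/(β−β_a) if and only if (β−β_u)·(δ_a·(β−β_a) − α_a·(δ−β_a)) > 0; in particular the inequality on the left holds whenever α_a/δ_a < (β−β_a)/(δ−β_a). -/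
/-- under 0 ≤ β_a < β_u < δ < β, α_a > 0, δ_a > 0, the second root
(δ_a(β−β_u) − α_a(δ−β_u))/(α_a(β_u−β_a)) exceeds (β−δ)/(β−β_a) iff
(β−β_u)(δ_a(β−β_a) − α_a(δ−β_a)) > 0; in particular this holds whenever
α_a/δ_a < (β−β_a)/(δ−β_a). -/
theorem sauis_second_root_comparison
    (β βa βu δ αa δa : ℝ)
    (hβa0 : 0 ≤ βa) (hβaβu : βa < βu) (hβuδ : βu < δ) (hδβ : δ < β)
    (hαa : 0 < αa) (hδa : 0 < δa) :
    ((β - δ) / (β - βa) < (δa * (β - βu) - αa * (δ - βu)) / (αa * (βu - βa)) ↔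
      0 < (β - βu) * (δa * (β - βa) - αa * (δ - βa))) ∧
    (αa / δa < (β - βa) / (δ - βa) →
      (β - δ) / (β - βa) < (δa * (β - βu) - αa * (δ - βu)) / (αa * (βu - βa))) := by
  have h1 : (0:ℝ) < β - βa := by linarith
  have h2 : (0:ℝ) < αa * (βu - βa) := by
    have := sub_pos.mpr hβaβu; positivity
  have key : ((β - δ) / (β - βa) < (δa * (β - βu) - αa * (δ - βu)) / (αa * (βu - βa)) ↔
      0 < (β - βu) * (δa * (β - βa) - αa * (δ - βa))) := by
    rw [div_lt_div_iff₀ h1 h2]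
    constructor
    · intro h; nlinarith
    · intro h; nlinarith
  refine ⟨key, fun h => ?_⟩
  rw [key]
  rw [div_lt_div_iff₀ hδa (by linarith : (0:ℝ) < δ - βa)] at h
  have : (0:ℝ) < β - βu := by linarith
  nlinarith
end

section
/- Suppose 0 ≤ β_a < δ < β, δ_a > 0, ν_a ≥ 0, η > 0 and m ≥ 1. Then f₂(a,0) = (σ_m(i(a,0))/β)·(−β_a·ν_a·a² + (β·δ_a + δ·ν_a)·a) for all a with 0 ≤ i(a,0) ≤ 1, and f₂(a,0) > 0 for every a ∈ (0, (β−δ)/(β−β_a)); moreover, when β_a·ν_a > 0 the second root (β·δ_a + δ·ν_a)/(β_a·ν_a) of the quadratic factor is greater than 1. -/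
/-- with f₂ the u-equation right-hand side (ε = 0) evaluated on the
endemic-equilibrium plane, f₂(a,0) = (σ_m(i(a,0))/β)(−β_aν_a a² + (βδ_a + δν_a)a)
for all a with 0 ≤ i(a,0) ≤ 1, f₂(a,0) > 0 for a ∈ (0, (β−δ)/(β−β_a)), and, when
β_aν_a > 0, the second root (βδ_a + δν_a)/(β_aν_a) is greater than 1. -/
theorem sauis_f2_on_bottom_edge
    (β βa βu νa δ δa δu η m : ℝ)
    (hβa0 : 0 ≤ βa) (hβaδ : βa < δ) (hδβ : δ < β)
    (hδa : 0 < δa) (hνa : 0 ≤ νa) (hη : 0 < η) (hm : 1 ≤ m) :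
    let iplane : ℝ → ℝ → ℝ := fun a u => (β - δ - (β - βa) * a - (β - βu) * u) / β
    let σ : ℝ → ℝ := fun i => 1 / (1 + (i / η) ^ m)
    let f2 : ℝ → ℝ → ℝ := fun a u =>
      δa * σ (iplane a u) * a + νa * σ (iplane a u) * (1 - a - u - iplane a u) * a
        - βu * u * iplane a u - δu * u
    (∀ a : ℝ, 0 ≤ iplane a 0 → iplane a 0 ≤ 1 →
      f2 a 0 = (σ (iplane a 0) / β) * (-(βa * νa) * a ^ 2 + (β * δa + δ * νa) * a)) ∧
    (∀ a : ℝ, 0 < a → a < (β - δ) / (β - βa) → 0 < f2 a 0) ∧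
    (0 < βa * νa → 1 < (β * δa + δ * νa) / (βa * νa)) := by
  intro iplane σ f2
  have hβ0 : (0 : ℝ) < β := lt_trans (lt_of_le_of_lt hβa0 hβaδ) hδβ
  have hib : βa < β := lt_trans hβaδ hδβ
  have key : ∀ a : ℝ, f2 a 0 =
      (σ (iplane a 0) / β) * (-(βa * νa) * a ^ 2 + (β * δa + δ * νa) * a) := by
    intro a
    have inner : δa * a + νa * (1 - a - 0 - iplane a 0) * a
        = (1 / β) * (-(βa * νa) * a ^ 2 + (β * δa + δ * νa) * a) := by
      simp only [iplane]
      field_simp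
      ring
    simp only [f2]
    rw [mul_zero, zero_mul, mul_zero, sub_zero, sub_zero]
    linear_combination σ (iplane a 0) * inner
  refine ⟨fun a _ _ => key a, fun a ha0 ha1 => ?_, fun h => ?_⟩
  · rw [key a]
    have hi0 : 0 < iplane a 0 := by
      have h1 : (β - βa) * a < β - δ := by
        have := (lt_div_iff₀ (by linarith : (0:ℝ) < β - βa)).mp ha1
        linarith
      simp only [iplane]
      have : 0 < β - δ - (β - βa) * a - (β - βu) * 0 := by linarith
      positivity
    have hσ : 0 < σ (iplane a 0) := by
      have hp : (0:ℝ) < (iplane a 0 / η) ^ m :=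
        Real.rpow_pos_of_pos (div_pos hi0 hη) m
      simp only [σ]
      positivity
    have ha1' : a < 1 := by
      have hfrac : (β - δ) / (β - βa) ≤ 1 := by
        rw [div_le_one (by linarith : (0:ℝ) < β - βa)]; linarith
      linarith
    have hquad : 0 < -(βa * νa) * a ^ 2 + (β * δa + δ * νa) * a := by
      have hfac : 0 < β * δa + νa * (δ - βa * a) := by
        have h1 : βa * a < δ := by nlinarith
        have : 0 ≤ νa * (δ - βa * a) := by nlinarith
        nlinarith
      nlinarith
    positivity
  · rw [lt_div_iff₀ h]
    have hνa' : 0 < νa := by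
      rcases hνa.lt_or_eq with h' | h'
      · exact h'
      · exfalso; rw [← h'] at h; simp at h
    nlinarith
end
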